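/- If two columns among the first n-1 columns of an n×n matrix A over an infinite field are equal, then A has at least two distinct LU factorizations (if it has any with singular factors allowed), i.e., the LU factorization of A is not unique. -/

import Mathlib

open Matrix

theorem stmt_16 {F : Type*} [Field F] [Infinite F] {n : ℕ}
    (A : Matrix (Fin n) (Fin n) F) (j₁ j₂ : Fin n) (hne : j₁ ≠ j₂)
    (hj₁ : (j₁ : ℕ) < n - 1) (hj₂ : (j₂ : ℕ) < n - 1)
    (hcols : ∀ i : Fin n, A i j₁ = A i j₂)
    (hfac : ∃ L U : Matrix (Fin n) (Fin n) F,
      (∀ i j : Fin n, i < j → L i j = 0) ∧ (∀ i : Fin n, L i i = 1) ∧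
      (∀ i j : Fin n, j < i → U i j = 0) ∧ A = L * U) :
    ∃ L U L' U' : Matrix (Fin n) (Fin n) F,
      ((∀ i j : Fin n, i < j → L i j = 0) ∧ (∀ i : Fin n, L i i = 1) ∧
        (∀ i j : Fin n, j < i → U i j = 0) ∧ A = L * U) ∧
      ((∀ i j : Fin n, i < j → L' i j = 0) ∧ (∀ i : Fin n, L' i i = 1) ∧
        (∀ i j : Fin n, j < i → U' i j = 0) ∧ A = L' * U') ∧
      (L, U) ≠ (L', U') := by
  obtain ⟨L, U, hL, hLd, hU, hA⟩ := hfac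
  have hn : 0 < n := j₁.pos
  -- L has determinant 1, hence is invertible and mulVec-injective
  have hdet : L.det = 1 := by
    rw [Matrix.det_of_lowerTriangular L (fun i j hij => hL i j hij)]
    simp [hLd]
  have hinj : Function.Injective L.mulVec :=
    Matrix.mulVec_injective_iff_isUnit.2
      ((Matrix.isUnit_iff_isUnit_det L).2 (by rw [hdet]; exact isUnit_one))
  -- columns j₁ and j₂ of U are equal
  have hUcols : ∀ i, U i j₁ = U i j₂ := by
    have h : L.mulVec (fun k => U k j₁) = L.mulVec (fun k => U k j₂) := by
      funext i
      have h1 := congrFun (congrFun hA i) j₁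
      have h2 := congrFun (congrFun hA i) j₂
      simp only [Matrix.mul_apply] at h1 h2
      simpa [Matrix.mulVec, dotProduct, ← h1, ← h2] using hcols i
    intro i
    exact congrFun (hinj h) i
  -- set p = min, q = max of the two columns
  set p : Fin n := ⟨min (j₁ : ℕ) (j₂ : ℕ), lt_of_le_of_lt (min_le_left _ _) j₁.isLt⟩ with hp
  set q : Fin n := ⟨max (j₁ : ℕ) (j₂ : ℕ), max_lt j₁.isLt j₂.isLt⟩ with hq
  have hvne : (j₁ : ℕ) ≠ (j₂ : ℕ) := fun h => hne (Fin.ext h)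
  have hpq : p < q := by
    rw [Fin.lt_def]
    simp only [hp, hq]
    omega
  have hqn : (q : ℕ) < n - 1 := by simp only [hq]; omega
  have hUpq : ∀ i, U i p = U i q := by
    intro i
    rcases le_or_gt (j₁ : ℕ) (j₂ : ℕ) with h | h
    · have hpj : p = j₁ := Fin.ext (by simp [hp, h])
      have hqj : q = j₂ := Fin.ext (by simp [hq, h])
      rw [hpj, hqj]; exact hUcols i
    · have hpj : p = j₂ := Fin.ext (by simp [hp, le_of_lt h])
      have hqj : q = j₁ := Fin.ext (by simp [hq, le_of_lt h])
      rw [hpj, hqj]; exact (hUcols i).symm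
  have hUqq : U q q = 0 := by
    rw [← hUpq q]
    exact hU q p hpq
  -- the index a = q + 1
  have han : (q : ℕ) + 1 < n := by omega
  set a : Fin n := ⟨(q : ℕ) + 1, han⟩ with ha
  have hqa : q < a := by rw [Fin.lt_def]; simp [ha]
  have haq : a ≠ q := ne_of_gt hqa
  set N : Matrix (Fin n) (Fin n) F := Matrix.single a q (1 : F) with hN
  have hNN : N * N = 0 := by
    rw [hN, Matrix.single_mul_single_of_ne (h := Ne.symm haq)]
  refine ⟨L, U, L * (1 + N), (1 - N) * U, ⟨hL, hLd, hU, hA⟩, ⟨?_, ?_, ?_, ?_⟩, ?_⟩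
  · -- L' lower triangular
    intro i j hij
    rw [Matrix.mul_add, Matrix.mul_one, Matrix.add_apply]
    rcases eq_or_ne j q with rfl | hjq
    · simp [hN, hL i q hij, hL i a (hij.trans hqa)]
    · simp [hN, hjq, hL i j hij]
  · -- L' unit diagonal
    intro i
    rw [Matrix.mul_add, Matrix.mul_one, Matrix.add_apply]
    rcases eq_or_ne i q with rfl | hiq
    · simp [hN, hLd q, hL q a hqa]
    · simp [hN, hiq, hLd i]
  · -- U' upper triangular
    intro i j hji
    rw [Matrix.sub_mul, Matrix.one_mul, Matrix.sub_apply]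
    rcases eq_or_ne i a with rfl | hia
    · rcases eq_or_ne j q with rfl | hjq
      · simp [hN, hU a q hji, hUqq]
      · have hjq' : j < q := by
          rw [Fin.lt_def] at hji ⊢
          simp only [ha] at hji
          rcases lt_or_eq_of_le (Nat.lt_succ_iff.mp hji) with h | h
          · exact h
          · exact absurd (Fin.ext h) hjq
        simp [hN, hU a j hji, hU q j hjq']
    · simp [hN, hia, Ne.symm hia, hU i j hji]
  · -- factorization
    rw [hA]
    have h1 : (1 + N) * (1 - N) = 1 := by
      rw [mul_sub, mul_one, add_mul, one_mul, hNN, add_zero, add_sub_cancel_right]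
    rw [Matrix.mul_assoc, ← Matrix.mul_assoc (1 + N), h1, Matrix.one_mul]
  · -- the factorizations are distinct
    intro h
    have hLL : L = L * (1 + N) := congrArg Prod.fst h
    have := congrFun (congrFun hLL a) q
    rw [Matrix.mul_add, Matrix.mul_one, Matrix.add_apply, hN,
      Matrix.mul_single_apply_same, mul_one, hLd a] at this
    exact one_ne_zero (left_eq_add.mp this)
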